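/- Let f : ℝⁿ → ℝ be μ-strongly convex and L-smooth with 0 < μ ≤ L, let x* be its minimizer, and let x ∈ ℝⁿ. Then the gradient-descent step with step size η = 1/L satisfies ‖x - (1/L)∇f(x) - x*‖ ≤ (1 - μ/(μ+L))·‖x - x*‖. -/

import Mathlib

/-!
Subtracting `μ/2 ‖·‖²` from `f` leaves a convex function `h` with gradient `∇f - μ • id` that obeys
the descent bound with constant `L - μ`, so the Baillon–Haddad argument makes
`w := ∇h x - ∇h x*` cocoercive: `‖w‖² ≤ (L - μ) ⟪w, x - x*⟫`, which is a rearrangement of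
`⟪x - x*, ∇f x⟫ ≥ ‖∇f x‖² / (μ + L) + μ L / (μ + L) ‖x - x*‖²`. As `∇f x* = 0`, the gradient step
is `x - x* - ∇f x / L = ((L - μ) (x - x*) - w) / L`, and cocoercivity with constant `C` gives
`‖C (x - x*) - w‖ ≤ C ‖x - x*‖`. The resulting rate `(L - μ) / L` is at most `L / (μ + L)`.
-/

open scoped RealInnerProductSpace

section InnerProductSpace

variable {E : Type*} [NormedAddCommGroup E] [InnerProductSpace ℝ E]

theorem inner_sub_smul_sub_eq (v a b : E) (c : ℝ) :
    ⟪v - c • a, b - a⟫ = ⟪v, b - a⟫ + c / 2 * ‖b - a‖ ^ 2 - (c / 2 * ‖b‖ ^ 2 - c / 2 * ‖a‖ ^ 2) := by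
  have hb : ‖b‖ ^ 2 = ‖a‖ ^ 2 + 2 * ⟪a, b - a⟫ + ‖b - a‖ ^ 2 := by
    rw [← norm_add_sq_real, add_sub_cancel]
  rw [inner_sub_left, real_inner_smul_left]
  linear_combination c / 2 * hb

theorem norm_smul_sub_le_of_norm_sq_le_inner {C : ℝ} (hC : 0 ≤ C) {w d : E}
    (hw : ‖w‖ ^ 2 ≤ C * ⟪w, d⟫) : ‖C • d - w‖ ≤ C * ‖d‖ := by
  have hsq : ‖C • d - w‖ ^ 2 ≤ (C * ‖d‖) ^ 2 := by
    rw [norm_sub_sq_real, norm_smul, Real.norm_of_nonneg hC, real_inner_smul_left,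
      real_inner_comm]
    nlinarith [sq_nonneg ‖w‖]
  exact (pow_le_pow_iff_left₀ (norm_nonneg _) (by positivity) two_ne_zero).1 hsq

theorem mul_norm_sub_sq_le_inner_of_strongly_convex {f : E → ℝ} {g : E → E} {μ : ℝ}
    (hsc : ∀ x y, f y ≥ f x + ⟪g x, y - x⟫ + μ / 2 * ‖y - x‖ ^ 2) (x y : E) :
    μ * ‖x - y‖ ^ 2 ≤ ⟪g x - g y, x - y⟫ := by
  have hxy := hsc x y
  have hyx := hsc y x
  rw [← neg_sub x y, inner_neg_right, norm_neg] at hxy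
  rw [inner_sub_left]
  linarith

section Cocoercive

variable {h : E → ℝ} {gh : E → E} {C : ℝ}

theorem add_inner_add_norm_sq_le_of_convex_of_smooth (hC : 0 < C)
    (hconv : ∀ a b, h a + ⟪gh a, b - a⟫ ≤ h b)
    (hsmooth : ∀ a b, h b ≤ h a + ⟪gh a, b - a⟫ + C / 2 * ‖b - a‖ ^ 2) (p q : E) :
    h p + ⟪gh p, q - p⟫ + 1 / (2 * C) * ‖gh q - gh p‖ ^ 2 ≤ h q := by
  set u := gh q - gh p
  have hlow := hconv p (q - C⁻¹ • u)
  have hup := hsmooth q (q - C⁻¹ • u)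
  rw [sub_right_comm, inner_sub_right, real_inner_smul_right] at hlow
  rw [sub_sub_cancel_left, inner_neg_right, real_inner_smul_right, norm_neg, norm_smul,
    Real.norm_of_nonneg (inv_nonneg.2 hC.le)] at hup
  have hu : ⟪gh q, u⟫ - ⟪gh p, u⟫ = ‖u‖ ^ 2 := by
    rw [← inner_sub_left, real_inner_self_eq_norm_sq]
  have hq : C / 2 * (C⁻¹ * ‖u‖) ^ 2 = 1 / (2 * C) * ‖u‖ ^ 2 := by
    field_simp
  have hC' : C⁻¹ * ‖u‖ ^ 2 = 2 * (1 / (2 * C) * ‖u‖ ^ 2) := by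
    field_simp
  linear_combination hlow + hup - C⁻¹ * hu + hq - hC'

theorem norm_sub_sq_le_inner_of_convex_of_smooth (hC : 0 < C)
    (hconv : ∀ a b, h a + ⟪gh a, b - a⟫ ≤ h b)
    (hsmooth : ∀ a b, h b ≤ h a + ⟪gh a, b - a⟫ + C / 2 * ‖b - a‖ ^ 2) (a b : E) :
    ‖gh a - gh b‖ ^ 2 ≤ C * ⟪gh a - gh b, a - b⟫ := by
  have hab := add_inner_add_norm_sq_le_of_convex_of_smooth hC hconv hsmooth a b
  have hba := add_inner_add_norm_sq_le_of_convex_of_smooth hC hconv hsmooth b a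
  rw [norm_sub_rev, ← neg_sub a b, inner_neg_right] at hab
  have hC2 : C * (1 / (2 * C)) = 1 / 2 := by field_simp
  rw [inner_sub_left]
  linear_combination C * (hab + hba) - 2 * ‖gh a - gh b‖ ^ 2 * hC2

end Cocoercive

end InnerProductSpace

section CompleteSpace

variable {E : Type*} [NormedAddCommGroup E] [InnerProductSpace ℝ E] [CompleteSpace E]

theorem le_add_inner_add_norm_sq_of_lipschitz_gradient {f : E → ℝ} {g : E → E} {L : ℝ}
    (hgrad : ∀ x, HasGradientAt f (g x) x) (hsm : ∀ x y, ‖g x - g y‖ ≤ L * ‖x - y‖) (x y : E) :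
    f y ≤ f x + ⟪g x, y - x⟫ + L / 2 * ‖y - x‖ ^ 2 := by
  set v := y - x
  let ψ : ℝ → ℝ := fun t => f (x + t • v) - t * ⟪g x, v⟫ - t ^ 2 * (L / 2 * ‖v‖ ^ 2)
  have hψ : ∀ t, HasDerivAt ψ (⟪g (x + t • v) - g x, v⟫ - t * (L * ‖v‖ ^ 2)) t := by
    intro t
    have hline : HasDerivAt (fun s : ℝ => x + s • v) v t := by
      simpa using ((hasDerivAt_id t).smul_const v).const_add x
    have hf := (hgrad (x + t • v)).hasFDerivAt.comp_hasDerivAt t hline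
    simp only [InnerProductSpace.toDual_apply_apply] at hf
    refine ((hf.sub ((hasDerivAt_id t).mul_const ⟪g x, v⟫)).sub
      ((hasDerivAt_pow 2 t).mul_const (L / 2 * ‖v‖ ^ 2))).congr_deriv ?_
    rw [inner_sub_left]
    simp only [Nat.cast_ofNat]
    ring
  have hψ'_nonpos : ∀ t : ℝ, 0 < t → ⟪g (x + t • v) - g x, v⟫ - t * (L * ‖v‖ ^ 2) ≤ 0 := by
    intro t ht
    have := calc
      ⟪g (x + t • v) - g x, v⟫ ≤ ‖g (x + t • v) - g x‖ * ‖v‖ := real_inner_le_norm _ _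
      _ ≤ L * ‖x + t • v - x‖ * ‖v‖ := by gcongr; exact hsm _ _
      _ = t * (L * ‖v‖ ^ 2) := by
        rw [add_sub_cancel_left, norm_smul, Real.norm_of_nonneg ht.le]; ring
    linarith
  have hanti : AntitoneOn ψ (Set.Ici 0) := by
    refine antitoneOn_of_hasDerivWithinAt_nonpos (convex_Ici 0)
      (fun t _ => (hψ t).continuousAt.continuousWithinAt) (fun t _ => (hψ t).hasDerivWithinAt) ?_
    rw [interior_Ici]
    exact hψ'_nonpos
  have h01 : ψ 1 ≤ ψ 0 := hanti Set.self_mem_Ici (by norm_num : (1 : ℝ) ∈ Set.Ici 0) zero_le_one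
  norm_num [ψ, v] at h01
  linarith

theorem norm_sub_sq_le_inner_of_strongly_convex_of_lipschitz_gradient {f : E → ℝ} {g : E → E}
    {μ L : ℝ} (hμ : 0 ≤ μ) (hμL : μ ≤ L) (hgrad : ∀ x, HasGradientAt f (g x) x)
    (hsc : ∀ x y, f y ≥ f x + ⟪g x, y - x⟫ + μ / 2 * ‖y - x‖ ^ 2)
    (hsm : ∀ x y, ‖g x - g y‖ ≤ L * ‖x - y‖) (x y : E) :
    ‖g x - g y - μ • (x - y)‖ ^ 2 ≤ (L - μ) * ⟪g x - g y - μ • (x - y), x - y⟫ := by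
  rcases hμL.eq_or_lt with rfl | hlt
  · have hmono := mul_norm_sub_sq_le_inner_of_strongly_convex hsc x y
    have hlip := hsm x y
    rw [sub_self, zero_mul, norm_sub_sq_real, norm_smul, Real.norm_eq_abs, mul_pow, sq_abs,
      real_inner_smul_right]
    nlinarith [mul_le_mul_of_nonneg_left hmono hμ, pow_le_pow_left₀ (norm_nonneg _) hlip 2]
  · have hconv : ∀ a b, (f a - μ / 2 * ‖a‖ ^ 2) + ⟪g a - μ • a, b - a⟫
        ≤ f b - μ / 2 * ‖b‖ ^ 2 := fun a b => by
      linarith [hsc a b, inner_sub_smul_sub_eq (g a) a b μ]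
    have hsmooth : ∀ a b, f b - μ / 2 * ‖b‖ ^ 2
        ≤ (f a - μ / 2 * ‖a‖ ^ 2) + ⟪g a - μ • a, b - a⟫ + (L - μ) / 2 * ‖b - a‖ ^ 2 :=
      fun a b => by
        linarith [le_add_inner_add_norm_sq_of_lipschitz_gradient hgrad hsm a b,
          inner_sub_smul_sub_eq (g a) a b μ]
    have hshift : g x - μ • x - (g y - μ • y) = g x - g y - μ • (x - y) := by module
    simpa only [hshift] using
      norm_sub_sq_le_inner_of_convex_of_smooth (sub_pos.2 hlt) hconv hsmooth x y

end CompleteSpace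

/-- For `μ`-strongly convex, `L`-smooth `f` with `0 < μ ≤ L` and minimizer `x*`,
the gradient step with step size `1/L` contracts:
`‖x - (1/L)∇f(x) - x*‖ ≤ (1 - μ/(μ+L))‖x - x*‖`. -/
theorem gradient_step_contraction
    {n : ℕ} (f : EuclideanSpace ℝ (Fin n) → ℝ)
    (g : EuclideanSpace ℝ (Fin n) → EuclideanSpace ℝ (Fin n))
    (μ L : ℝ) (hμ : 0 < μ) (hμL : μ ≤ L)
    (hgrad : ∀ x, HasGradientAt f (g x) x)
    (hsc : ∀ x y, f y ≥ f x + ⟪g x, y - x⟫ + μ / 2 * ‖y - x‖ ^ 2)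
    (hsm : ∀ x y, ‖g x - g y‖ ≤ L * ‖x - y‖)
    (xstar : EuclideanSpace ℝ (Fin n)) (hgrad0 : g xstar = 0)
    (x : EuclideanSpace ℝ (Fin n)) :
    ‖x - (1 / L) • g x - xstar‖ ≤ (1 - μ / (μ + L)) * ‖x - xstar‖ := by
  have hL : 0 < L := hμ.trans_le hμL
  set d := x - xstar
  have hcoco :=
    norm_sub_sq_le_inner_of_strongly_convex_of_lipschitz_gradient hμ.le hμL hgrad hsc hsm x xstar
  rw [hgrad0, sub_zero] at hcoco
  have hstep : x - (1 / L) • g x - xstar = (1 / L) • ((L - μ) • d - (g x - μ • d)) := by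
    rw [show (L - μ) • d - (g x - μ • d) = L • d - g x by module, smul_sub, smul_smul, one_div,
      inv_mul_cancel₀ hL.ne', one_smul]
    module
  have hrate : (1 / L) * (L - μ) ≤ 1 - μ / (μ + L) := by
    rw [one_sub_div (add_pos hμ hL).ne', add_sub_cancel_left, div_mul_eq_mul_div, one_mul,
      div_le_div_iff₀ hL (add_pos hμ hL)]
    nlinarith
  calc ‖x - (1 / L) • g x - xstar‖ = (1 / L) * ‖(L - μ) • d - (g x - μ • d)‖ := by
        rw [hstep, norm_smul, Real.norm_of_nonneg (one_div_pos.2 hL).le]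
    _ ≤ (1 / L) * ((L - μ) * ‖d‖) := by
        gcongr
        exact norm_smul_sub_le_of_norm_sq_le_inner (sub_nonneg.2 hμL) hcoco
    _ ≤ (1 - μ / (μ + L)) * ‖d‖ := by
        rw [← mul_assoc]
        gcongr
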